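/- arXiv:1610.02730 — 3 statements merged into one kernel-verified Lean document; each statement's English description precedes it below -/
import Mathlib

section
/- Let f : N → M be a k-sheeted covering map of smooth manifolds and V a smooth section of the tangent bundle TN. Let Q = {df_y(V(y)) : y ∈ N} ⊆ TM and let Σ ⊆ M be the set of points x such that the set {df_y(V(y)) : y ∈ f⁻¹(x)} has fewer than k elements. Then Σ's complement M' = M \ Σ is such that Q ∩ π_{TM}⁻¹(M') is a k-sheeted covering space of M' under the tangent bundle projection. -/
/-!
Over a point `x ∉ Σ` the `k` points of `f⁻¹ x` are sent to `k` distinct vectors of `T_x M`;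
since the fibres of a fibre bundle with Hausdorff fibre are Hausdorff, these vectors have
pairwise disjoint neighbourhoods. Following the `k` sheets of `f` over a small neighbourhood
of `x`, the vectors `df(V)` stay in these neighbourhoods, so `y ↦ df_y (V y)` is a
homeomorphism from `f⁻¹ M'` onto the part of `Q` over `M'` commuting with the projections:
`Q` over `M'` is a covering isomorphic to `f` over `M'`.
-/

open Bundle

section

open Topology Filter Set Function

theorem FiberBundle.isSeparatedMap_proj {B F : Type*} [TopologicalSpace B] [TopologicalSpace F]
    [T2Space F] {E : B → Type*} [TopologicalSpace (TotalSpace F E)]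
    [∀ b, TopologicalSpace (E b)] [FiberBundle F E] : IsSeparatedMap (π F E) := by
  refine isSeparatedMap_iff_disjoint_nhds.2 fun v w hvw hne => ?_
  set τ := trivializationAt F E v.proj
  have hv : v ∈ τ.source := FiberBundle.mem_trivializationAt_proj_source
  have hw : w ∈ τ.source := by
    rw [τ.mem_source, ← hvw]; exact FiberBundle.mem_baseSet_trivializationAt F E _
  have hsnd : (τ v).2 ≠ (τ w).2 := fun h => hne <| by
    rw [← τ.symm_apply_mk_proj hv, ← τ.symm_apply_mk_proj hw, hvw, h]
  exact (τ.continuousAt hv).snd.tendsto.disjoint (disjoint_nhds_nhds.2 hsnd)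
    (τ.continuousAt hw).snd.tendsto

variable {N M T : Type*} [TopologicalSpace N] [TopologicalSpace M] [TopologicalSpace T]
  {f : N → M} {pr : T → M} {g : N → T}

theorem IsCoveringMap.exists_local_sections (hf : IsCoveringMap f) (x₀ : M)
    [Nonempty (f ⁻¹' {x₀})] :
    ∃ sec : f ⁻¹' {x₀} → M → N, (∀ i, ContinuousAt (sec i) x₀) ∧ (∀ i, sec i x₀ = i) ∧
      ∀ᶠ x in 𝓝 x₀, ∀ y, f y = x → ∃ i, sec i x = y := by
  set t := (hf x₀).toTrivialization
  have hx₀ : x₀ ∈ t.baseSet := (hf x₀).mem_toTrivialization_baseSet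
  refine ⟨fun i x => t.toOpenPartialHomeomorph.symm (x, i), fun i => ?_, ?_, ?_⟩
  · exact (t.toOpenPartialHomeomorph.continuousAt_symm (t.mem_target.2 hx₀)).comp
      (continuous_id.prodMk continuous_const).continuousAt
  · rintro ⟨y, rfl : f y = x₀⟩
    have h := t.symm_apply_mk_proj (t.mem_source.2 hx₀)
    rwa [(hf (f y)).toTrivialization_apply] at h
  · filter_upwards [t.open_baseSet.eventually_mem hx₀] with x hx y hy
    subst hy
    exact ⟨(t y).2, t.symm_apply_mk_proj (t.mem_source.2 hx)⟩

theorem IsCoveringMap.nhds_eq_comap_of_injOn_fiber (hf : IsCoveringMap f) (hpr : Continuous pr)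
    (hsep : IsSeparatedMap pr) (hg : Continuous g) (hgf : ∀ y, pr (g y) = f y) {y₀ : N}
    (hfin : (f ⁻¹' {f y₀}).Finite) (hinj : (f ⁻¹' {f y₀}).InjOn g) :
    𝓝 y₀ = comap g (𝓝 (g y₀)) := by
  refine le_antisymm (hg.tendsto y₀).le_comap (fun W hW => ?_)
  set i₀ : f ⁻¹' {f y₀} := ⟨y₀, rfl⟩
  have : Nonempty (f ⁻¹' {f y₀}) := ⟨i₀⟩
  have : Finite (f ⁻¹' {f y₀}) := hfin.to_subtype
  obtain ⟨sec, hsec_cont, hsec_i, hsheets⟩ := hf.exists_local_sections (f y₀)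
  have hsep_sheets (i : f ⁻¹' {f y₀}) :
      ∃ B ∈ 𝓝 (g y₀), ∀ᶠ x in 𝓝 (f y₀), g (sec i x) ∈ B → i = i₀ := by
    by_cases hi : i = i₀
    · exact ⟨univ, univ_mem, .of_forall fun _ _ => hi⟩
    have hne : g i ≠ g y₀ := fun h => hi (Subtype.ext (hinj i.2 rfl h))
    obtain ⟨A, hA, B, hB, hAB⟩ := Filter.disjoint_iff.1 <|
      isSeparatedMap_iff_disjoint_nhds.1 hsep _ _ (by rw [hgf, hgf]; exact i.2) hne
    refine ⟨B, hB, ((hg.continuousAt.comp (hsec_cont i)).eventually_mem ?_).mono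
      fun x hx hxB => (hAB.notMem_of_mem_left hx hxB).elim⟩
    rwa [comp_apply, hsec_i]
  -- Near `f y₀` every sheet other than the one through `y₀` avoids a neighbourhood of `g y₀`.
  choose B hB hBsec using hsep_sheets
  have hbase : ∀ᶠ x in 𝓝 (f y₀), (∀ y, f y = x → ∃ i, sec i x = y) ∧ sec i₀ x ∈ W ∧
      ∀ i, g (sec i x) ∈ B i → i = i₀ :=
    hsheets.and <| ((hsec_cont i₀).eventually_mem (by rwa [hsec_i])).and (eventually_all.2 hBsec)
  have hpr_tendsto : Tendsto pr (𝓝 (g y₀)) (𝓝 (f y₀)) := hgf y₀ ▸ hpr.tendsto (g y₀)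
  have hnear : ∀ᶠ v in 𝓝 (g y₀), (∀ i, v ∈ B i) ∧ (∀ y, f y = pr v → ∃ i, sec i (pr v) = y) ∧
      sec i₀ (pr v) ∈ W ∧ ∀ i, g (sec i (pr v)) ∈ B i → i = i₀ :=
    (eventually_all.2 hB).and (hpr_tendsto.eventually hbase)
  rw [mem_comap']
  refine hnear.mono fun v ⟨hvB, hvsheets, hvW, hvsheet⟩ y hy => ?_
  subst hy
  rw [hgf] at hvsheets hvW hvsheet
  obtain ⟨j, hj⟩ := hvsheets y rfl
  have hj₀ : j = i₀ := hvsheet j (by rw [hj]; exact hvB j)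
  rwa [← hj, hj₀]

def rangeProjOver (g : N → T) (pr : T → M) (s : Set M) :
    {v // v ∈ range g ∧ pr v ∈ s} → s :=
  fun v => ⟨pr v.1, v.2.2⟩

theorem IsCoveringMap.exists_homeomorph_rangeProjOver_comp (hf : IsCoveringMap f)
    (hpr : Continuous pr) (hsep : IsSeparatedMap pr) (hg : Continuous g)
    (hgf : ∀ y, pr (g y) = f y) {s : Set M}
    (hfin : ∀ x ∈ s, (f ⁻¹' {x}).Finite) (hinj : ∀ x ∈ s, (f ⁻¹' {x}).InjOn g) :
    ∃ φ : f ⁻¹' s ≃ₜ {v // v ∈ range g ∧ pr v ∈ s},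
      rangeProjOver g pr s ∘ φ = s.restrictPreimage f := by
  let φ : f ⁻¹' s → {v // v ∈ range g ∧ pr v ∈ s} :=
    fun y => ⟨g y, mem_range_self _, by rw [hgf]; exact y.2⟩
  have hφ_inj : Injective φ := fun y y' h => Subtype.ext <| hinj _ y.2 rfl
    (show f y' = f y by rw [← hgf, ← hgf]; exact congrArg (pr ∘ Subtype.val) h.symm)
    (congrArg Subtype.val h)
  have hφ_surj : Surjective φ := by
    rintro ⟨_, ⟨y, rfl⟩, hy⟩
    exact ⟨⟨y, show f y ∈ s by rwa [← hgf]⟩, rfl⟩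
  have hφ_ind : IsInducing φ := by
    refine IsInducing.subtypeVal.of_comp_iff.1 (isInducing_iff_nhds.2 fun y => ?_)
    rw [IsInducing.subtypeVal.nhds_eq_comap,
      hf.nhds_eq_comap_of_injOn_fiber hpr hsep hg hgf (hfin _ y.2) (hinj _ y.2), comap_comap]
    rfl
  refine ⟨(Equiv.ofBijective φ ⟨hφ_inj, hφ_surj⟩).toHomeomorphOfIsInducing hφ_ind,
    funext fun y => Subtype.ext ?_⟩
  exact hgf y

theorem IsCoveringMap.isCoveringMap_rangeProjOver (hf : IsCoveringMap f) (hpr : Continuous pr)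
    (hsep : IsSeparatedMap pr) (hg : Continuous g) (hgf : ∀ y, pr (g y) = f y) {s : Set M}
    (hfin : ∀ x ∈ s, (f ⁻¹' {x}).Finite) (hinj : ∀ x ∈ s, (f ⁻¹' {x}).InjOn g) :
    IsCoveringMap (rangeProjOver g pr s) := by
  obtain ⟨φ, hφ⟩ := hf.exists_homeomorph_rangeProjOver_comp hpr hsep hg hgf hfin hinj
  exact (IsCoveringMap.comp_homeomorph_iff φ).1 (hφ ▸ hf.restrictPreimage s)

theorem IsCoveringMap.card_rangeProjOver_preimage (hf : IsCoveringMap f) (hpr : Continuous pr)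
    (hsep : IsSeparatedMap pr) (hg : Continuous g) (hgf : ∀ y, pr (g y) = f y) {s : Set M}
    (hfin : ∀ x ∈ s, (f ⁻¹' {x}).Finite) (hinj : ∀ x ∈ s, (f ⁻¹' {x}).InjOn g)
    (x : s) :
    Nat.card (rangeProjOver g pr s ⁻¹' {x}) = Nat.card (f ⁻¹' {x.1}) := by
  obtain ⟨φ, hφ⟩ := hf.exists_homeomorph_rangeProjOver_comp hpr hsep hg hgf hfin hinj
  have hfiber : φ ⁻¹' (rangeProjOver g pr s ⁻¹' {x}) = Subtype.val ⁻¹' (f ⁻¹' {x.1}) := by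
    rw [← preimage_comp, hφ]
    ext y; simp [Subtype.ext_iff]
  rw [← Nat.card_preimage_of_injective φ.injective (by simp [φ.surjective.range_eq]), hfiber,
    Nat.card_preimage_of_injective Subtype.val_injective]
  intro y hy
  exact ⟨⟨y, by simp_all⟩, rfl⟩

end

/-- Let `f : N → M` be a smooth `k`-sheeted covering map of smooth manifolds
and `V` a smooth vector field on `N`.  Let `Q = {df_y(V y) : y ∈ N} ⊆ TM` and let `Σ` be the
set of points `x ∈ M` over which the set `{df_y(V y) : y ∈ f⁻¹ x}` has fewer than `k` elements.
Then the part of `Q` lying over `M' = M \ Σ` is a `k`-sheeted covering space of `M'` under the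
tangent bundle projection. -/
theorem stmt3 {H : Type*} [TopologicalSpace H] {E : Type*} [NormedAddCommGroup E]
    [NormedSpace ℝ E] {I : ModelWithCorners ℝ E H}
    {N : Type*} [TopologicalSpace N] [ChartedSpace H N] [IsManifold I (⊤ : ℕ∞) N]
    {M : Type*} [TopologicalSpace M] [ChartedSpace H M] [IsManifold I (⊤ : ℕ∞) M]
    (f : N → M) (hf : ContMDiff I I (⊤ : ℕ∞) f) (hcov : IsCoveringMap f)
    (k : ℕ) (hk : 0 < k) (hsheets : ∀ x : M, Nat.card (f ⁻¹' {x}) = k)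
    (V : ∀ y : N, TangentSpace I y)
    (hV : ContMDiff I I.tangent (⊤ : ℕ∞) (fun y : N => (⟨y, V y⟩ : TangentBundle I N)))
    (Q : Set (TangentBundle I M))
    (hQ : Q = Set.range (fun y : N =>
      (⟨f y, mfderiv I I f y (V y)⟩ : TangentBundle I M)))
    (Sig : Set M)
    (hSig : Sig = {x : M | Set.ncard
      {v : TangentBundle I M | ∃ y : N, f y = x ∧
        v = (⟨f y, mfderiv I I f y (V y)⟩ : TangentBundle I M)} < k}) :
    IsCoveringMap (fun v : {v : TangentBundle I M // v ∈ Q ∧ v.proj ∉ Sig} =>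
      (⟨v.1.proj, v.2.2⟩ : {x : M // x ∉ Sig})) ∧
    ∀ x : {x : M // x ∉ Sig}, Nat.card
      ((fun v : {v : TangentBundle I M // v ∈ Q ∧ v.proj ∉ Sig} =>
        (⟨v.1.proj, v.2.2⟩ : {x : M // x ∉ Sig})) ⁻¹' {x}) = k := by
  subst hQ
  set g : N → TangentBundle I M := fun y => ⟨f y, mfderiv I I f y (V y)⟩
  have hproj := FiberBundle.continuous_proj E (TangentSpace I (M := M))
  have hg : Continuous g := (hf.continuous_tangentMap (by simp)).comp hV.continuous
  have hfin (x : M) : (f ⁻¹' {x}).Finite :=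
    Set.finite_coe_iff.1 (Nat.finite_of_card_ne_zero (hsheets x ▸ hk.ne'))
  have hinj : ∀ x ∈ Sigᶜ, (f ⁻¹' {x}).InjOn g := by
    intro x hx
    have himage : {v | ∃ y, f y = x ∧ v = g y} = g '' (f ⁻¹' {x}) := by
      ext v; simp [eq_comm]
    rw [hSig, Set.mem_compl_iff, Set.mem_ofPred_eq, himage, not_lt, ← hsheets x,
      Nat.card_coe_set_eq] at hx
    exact Set.injOn_of_ncard_image_eq (le_antisymm (Set.ncard_image_le (hfin x)) hx) (hfin x)
  have hsep := FiberBundle.isSeparatedMap_proj (F := E) (E := TangentSpace I (M := M))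
  exact ⟨hcov.isCoveringMap_rangeProjOver hproj hsep hg (fun _ => rfl) (fun x _ => hfin x) hinj,
    fun x => (hcov.card_rangeProjOver_preimage hproj hsep hg (fun _ => rfl) (fun x _ => hfin x)
      hinj x).trans (hsheets x)⟩
end

section
/- The map ι : [0,∞) × S¹ → ℂ × S¹ defined by ι(r, e^{iφ}) = (r e^{2iφ}, e^{iφ}) has image exactly Q = {(z, w) : |w| = 1, |z| w² = z}, and its restriction to (0,∞) × S¹ is a homeomorphism onto Q' = Q ∩ ((ℂ \ {0}) × S¹). -/
/-!
Since `‖w‖ = 1`, the point `(r w², w)` has first coordinate of norm `r`, so `(z, w) ↦ (‖z‖, w)`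
inverts the map; on `Q` the defining equation `‖z‖ w² = z` says exactly that this inverse is a
right inverse. Both maps are visibly continuous, and `r > 0` corresponds to `z ≠ 0`.
-/

lemma norm_ofReal_mul_sq_of_norm_eq_one {r : ℝ} (hr : 0 ≤ r) {w : ℂ} (hw : ‖w‖ = 1) :
    ‖(r : ℂ) * w ^ 2‖ = r := by
  simp [hw, abs_of_nonneg hr]

lemma range_ofReal_mul_sq_prod_self :
    Set.range (fun v : {r : ℝ // 0 ≤ r} × {w : ℂ // ‖w‖ = 1} =>
        (((v.1 : ℝ) : ℂ) * (v.2 : ℂ) ^ 2, (v.2 : ℂ))) =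
      {x : ℂ × ℂ | ‖x.2‖ = 1 ∧ ((‖x.1‖ : ℝ) : ℂ) * x.2 ^ 2 = x.1} := by
  ext x
  constructor
  · rintro ⟨⟨⟨r, hr⟩, ⟨w, hw⟩⟩, rfl⟩
    exact ⟨hw, by rw [norm_ofReal_mul_sq_of_norm_eq_one hr hw]⟩
  · rintro ⟨hw, hz⟩
    exact ⟨⟨⟨‖x.1‖, norm_nonneg _⟩, ⟨x.2, hw⟩⟩, Prod.ext hz rfl⟩

noncomputable def ofRealMulSqHomeomorph :
    {r : ℝ // 0 < r} × {w : ℂ // ‖w‖ = 1} ≃ₜ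
      {x : ℂ × ℂ // (‖x.2‖ = 1 ∧ ((‖x.1‖ : ℝ) : ℂ) * x.2 ^ 2 = x.1) ∧ x.1 ≠ 0} where
  toFun v := ⟨(((v.1 : ℝ) : ℂ) * (v.2 : ℂ) ^ 2, (v.2 : ℂ)),
    ⟨v.2.2, by rw [norm_ofReal_mul_sq_of_norm_eq_one v.1.2.le v.2.2]⟩,
    norm_pos_iff.1 (by rw [norm_ofReal_mul_sq_of_norm_eq_one v.1.2.le v.2.2]; exact v.1.2)⟩
  invFun x := (⟨‖x.1.1‖, norm_pos_iff.2 x.2.2⟩, ⟨x.1.2, x.2.1.1⟩)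
  left_inv v := by
    ext
    · exact norm_ofReal_mul_sq_of_norm_eq_one v.1.2.le v.2.2
    · rfl
  right_inv x := Subtype.ext (Prod.ext x.2.1.2 rfl)
  continuous_toFun := by fun_prop
  continuous_invFun := by fun_prop

/-- The map `ι : [0,∞) × S¹ → ℂ × S¹`, `ι(r, e^{iφ}) = (r e^{2iφ}, e^{iφ})`
(i.e. `ι(r,w) = (r·w², w)` for `|w| = 1`) has image exactly
`Q = {(z,w) : |w| = 1, |z|·w² = z}`, and its restriction to `(0,∞) × S¹` is a homeomorphism
onto `Q' = Q ∩ ((ℂ \ {0}) × S¹)`. -/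
theorem stmt12 :
    (Set.range (fun v : {r : ℝ // 0 ≤ r} × {w : ℂ // ‖w‖ = 1} =>
        (((v.1 : ℝ) : ℂ) * (v.2 : ℂ) ^ 2, (v.2 : ℂ))) =
      {x : ℂ × ℂ | ‖x.2‖ = 1 ∧ ((‖x.1‖ : ℝ) : ℂ) * x.2 ^ 2 = x.1}) ∧
    ∃ h : {r : ℝ // 0 < r} × {w : ℂ // ‖w‖ = 1} ≃ₜ
        {x : ℂ × ℂ // (‖x.2‖ = 1 ∧ ((‖x.1‖ : ℝ) : ℂ) * x.2 ^ 2 = x.1) ∧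
          x.1 ≠ 0},
      ∀ v : {r : ℝ // 0 < r} × {w : ℂ // ‖w‖ = 1},
        ((h v : ℂ × ℂ) = (((v.1 : ℝ) : ℂ) * (v.2 : ℂ) ^ 2, (v.2 : ℂ))) :=
  ⟨range_ofReal_mul_sq_prod_self, ofRealMulSqHomeomorph, fun _ => rfl⟩
end

section
/- Consider the binary differential equation y dx² − 2x dxdy − y dy² = 0 on ℝ², i.e., Q = {(x, y, [p : q]) ∈ ℝ² × ℝP¹ : y p² − 2xpq − y q² = 0}. Then over M' = ℝ² \ {(0,0)}, the projection (x,y,[p:q]) ↦ (x,y) restricted to Q' = Q ∩ (M' × ℝP¹) is a 2-sheeted covering map, and this covering is trivial: it admits two disjoint continuous sections s₁, s₂ : M' → Q' with s₁(M') ∪ s₂(M') = Q'. -/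
open Projectivization

noncomputable instance : TopologicalSpace (Projectivization ℝ (ℝ × ℝ)) :=
  @instTopologicalSpaceQuotient _ (projectivizationSetoid ℝ (ℝ × ℝ)) _

/-- The solution set of the binary differential equation `y dx² - 2x dxdy - y dy² = 0` in
`ℝ² × ℝP¹` (the condition is homogeneous, so it may be tested on the representative). -/
def bdeQ : Set ((ℝ × ℝ) × Projectivization ℝ (ℝ × ℝ)) :=
  {m | m.1.2 * m.2.rep.1 ^ 2 - 2 * m.1.1 * m.2.rep.1 * m.2.rep.2 -
        m.1.2 * m.2.rep.2 ^ 2 = 0}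

/-!
With `z = x + iy` and `w = p + iq` the equation says that `z̄ w²` is real, so over `z ≠ 0` its
solutions are the two perpendicular lines with `w² ∈ ℝ₊ z` and `w² ∈ ℝ₋ z`. On each slit plane a
branch of `√(x² + y²)` factors the form into these two lines, and the branches agree on the
overlap; this gives two continuous sections with complementary images. As `ℝP¹` is Hausdorff (it
embeds in the circle by doubling angles), the image of a section is closed, so both images are
clopen and the projection is a trivial double covering.
-/

open Function Set
open scoped LinearAlgebra.Projectivization

theorem Prod.mk_ne_zero_of_left {M N : Type*} [Zero M] [Zero N] {x : M} (y : N) (h : x ≠ 0) :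
    (x, y) ≠ 0 :=
  fun h₀ => h (Prod.mk_eq_zero.mp h₀).1

theorem Prod.mk_ne_zero_of_right {M N : Type*} [Zero M] [Zero N] (x : M) {y : N} (h : y ≠ 0) :
    (x, y) ≠ 0 :=
  fun h₀ => h (Prod.mk_eq_zero.mp h₀).2

theorem Prod.sq_add_sq_pos {u : ℝ × ℝ} (hu : u ≠ 0) : 0 < u.1 ^ 2 + u.2 ^ 2 := by
  have : u.1 ≠ 0 ∨ u.2 ≠ 0 := by
    contrapose! hu
    exact Prod.ext hu.1 hu.2
  rcases this with h | h <;> positivity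

namespace Projectivization

theorem mk_eq_mk_iff_mul_sub_mul_eq_zero {K : Type*} [Field K] {v w : K × K} (hv : v ≠ 0)
    (hw : w ≠ 0) : mk K v hv = mk K w hw ↔ v.1 * w.2 - v.2 * w.1 = 0 := by
  rw [mk_eq_mk_iff']
  constructor
  · rintro ⟨a, rfl⟩
    simp only [Prod.smul_fst, Prod.smul_snd, smul_eq_mul]
    ring
  · intro h
    rcases eq_or_ne w.1 0 with h₁ | h₁
    · have h₂ : w.2 ≠ 0 := fun h₂ => hw (Prod.ext h₁ h₂)
      refine ⟨v.2 / w.2, Prod.ext ?_ ?_⟩ <;> simp only [Prod.smul_fst, Prod.smul_snd, smul_eq_mul]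
      · rw [h₁, mul_zero, sub_zero] at h
        rw [h₁, mul_zero, (mul_eq_zero.mp h).resolve_right h₂]
      · field_simp
    · refine ⟨v.1 / w.1, Prod.ext ?_ ?_⟩ <;> simp only [Prod.smul_fst, Prod.smul_snd, smul_eq_mul]
      · field_simp
      · field_simp
        linear_combination h

theorem mk_ne_mk_neg_snd_fst {u : ℝ × ℝ} (hu : u ≠ 0) (hu' : (-u.2, u.1) ≠ 0) :
    mk ℝ u hu ≠ mk ℝ (-u.2, u.1) hu' := by
  rw [Ne, mk_eq_mk_iff_mul_sub_mul_eq_zero]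
  intro h
  linarith [Prod.sq_add_sq_pos hu]

theorem continuousOn_of_eq_mk {X : Type*} [TopologicalSpace X] {f : X → ℙ ℝ (ℝ × ℝ)}
    {u : X → ℝ × ℝ} {s : Set X} (hu : ContinuousOn u s)
    (hf : ∀ x ∈ s, ∃ hx : u x ≠ 0, f x = mk ℝ (u x) hx) : ContinuousOn f s := by
  choose hne hfu using hf
  rw [continuousOn_iff_continuous_domRestrict]
  have : s.domRestrict f = fun x : s => mk' ℝ ⟨u x, hne x x.2⟩ := funext fun x => hfu x x.2
  rw [this]
  exact continuous_quotient_mk'.comp (hu.domRestrict.subtype_mk _)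

/-- `(cos θ, sin θ) ↦ (cos 2θ, sin 2θ)`, extended homogeneously; it identifies `ℝP¹` with the
circle. -/
noncomputable def doubleAngle : ℙ ℝ (ℝ × ℝ) → ℝ × ℝ :=
  Projectivization.lift
    (fun w => ((w.1.1 ^ 2 - w.1.2 ^ 2) / (w.1.1 ^ 2 + w.1.2 ^ 2),
      2 * w.1.1 * w.1.2 / (w.1.1 ^ 2 + w.1.2 ^ 2)))
    (by
      rintro ⟨_, ha⟩ ⟨b, hb⟩ t rfl
      have ht : t ≠ 0 := by
        rintro rfl
        exact ha (zero_smul ℝ b)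
      have := Prod.sq_add_sq_pos hb
      simp only [Prod.smul_fst, Prod.smul_snd, smul_eq_mul, Prod.mk.injEq]
      constructor <;> field_simp)

theorem doubleAngle_mk (w : ℝ × ℝ) (hw : w ≠ 0) :
    doubleAngle (mk ℝ w hw) =
      ((w.1 ^ 2 - w.2 ^ 2) / (w.1 ^ 2 + w.2 ^ 2), 2 * w.1 * w.2 / (w.1 ^ 2 + w.2 ^ 2)) :=
  rfl

theorem continuous_doubleAngle : Continuous doubleAngle := by
  refine Continuous.quotient_lift (Continuous.prodMk ?_ ?_) _ <;>
    exact Continuous.div (by fun_prop) (by fun_prop) fun w => (Prod.sq_add_sq_pos w.2).ne'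

theorem doubleAngle_injective : Injective doubleAngle := by
  intro l l'
  induction l using Projectivization.ind with | h v hv => ?_
  induction l' using Projectivization.ind with | h w hw => ?_
  rw [doubleAngle_mk, doubleAngle_mk, Prod.mk.injEq, mk_eq_mk_iff_mul_sub_mul_eq_zero]
  have hv₀ := Prod.sq_add_sq_pos hv
  have hw₀ := Prod.sq_add_sq_pos hw
  rw [div_eq_div_iff hv₀.ne' hw₀.ne', div_eq_div_iff hv₀.ne' hw₀.ne']
  rintro ⟨h₁, h₂⟩
  have : (w.1 ^ 2 + w.2 ^ 2) * (v.1 * w.2 - v.2 * w.1) ^ 2 = 0 := by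
    linear_combination (w.2 ^ 2 - w.1 ^ 2) / 2 * h₁ - w.1 * w.2 * h₂
  simpa [hw₀.ne'] using this

instance : T2Space (ℙ ℝ (ℝ × ℝ)) :=
  .of_injective_continuous doubleAngle_injective continuous_doubleAngle

end Projectivization

section TwoSections

variable {E X : Type*} {f : E → X} {s₁ s₂ : X → E}

theorem natCard_preimage_singleton_of_sections (h₁ : LeftInverse f s₁) (h₂ : LeftInverse f s₂)
    (hdisj : range s₁ ∩ range s₂ = ∅) (hcover : range s₁ ∪ range s₂ = univ) (x : X) :
    Nat.card (f ⁻¹' {x}) = 2 := by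
  have hfiber : f ⁻¹' {x} = {s₁ x, s₂ x} := by
    ext e
    constructor
    · rintro rfl
      rcases hcover.symm ▸ mem_univ e with ⟨y, rfl⟩ | ⟨y, rfl⟩
      · exact .inl (congrArg s₁ (h₁ y)).symm
      · exact .inr (congrArg s₂ (h₂ y)).symm
    · rintro (rfl | rfl)
      exacts [h₁ x, h₂ x]
  have hne : s₁ x ≠ s₂ x := fun h =>
    (eq_empty_iff_forall_notMem.mp hdisj) (s₁ x) ⟨mem_range_self x, h ▸ mem_range_self x⟩
  rw [hfiber, Nat.card_coe_set_eq, ncard_pair hne]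

variable [TopologicalSpace E] [TopologicalSpace X]

/-- In a Hausdorff space the range of a continuous section is closed, so two sections with
complementary ranges split `E` into two clopen copies of `X`. -/
theorem IsCoveringMap.of_sections [T2Space E] (hf : Continuous f) (hs₁ : Continuous s₁)
    (hs₂ : Continuous s₂) (h₁ : LeftInverse f s₁) (h₂ : LeftInverse f s₂)
    (hdisj : range s₁ ∩ range s₂ = ∅) (hcover : range s₁ ∪ range s₂ = univ) :
    IsCoveringMap f := by
  have : Nonempty (X → E) := ⟨s₁⟩
  let s : Bool → X → E := fun b => cond b s₁ s₂
  have hs : ∀ b, Continuous (s b) := by rintro (_ | _) <;> assumption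
  have hinv : ∀ b, LeftInverse f (s b) := by rintro (_ | _) <;> assumption
  have hrange : (fun b => range (s b)) = fun b => cond b (range s₁) (range s₂) := by
    ext (_ | _) <;> rfl
  have hcompl : IsCompl (range s₁) (range s₂) :=
    ⟨disjoint_iff_inter_eq_empty.mpr hdisj, codisjoint_iff.mpr hcover⟩
  have hopen : ∀ b, IsOpen (range (s b)) := by
    rintro (_ | _)
    · show IsOpen (range s₂)
      rw [← hcompl.compl_eq]
      exact (h₁.isClosed_range hf hs₁).isOpen_compl
    · show IsOpen (range s₁)
      rw [← hcompl.symm.compl_eq]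
      exact (h₂.isClosed_range hf hs₂).isOpen_compl
  refine .mk f (fun _ => Bool)
    (fun _ => IsOpen.trivializationDiscrete (fun b => range (s b)) univ isOpen_univ
      (fun b W _ => ⟨fun hW => (hW.preimage hf).inter (hopen b), fun hW => ?_⟩)
      (fun b => (hinv b).rightInvOn_range.injOn)
      (fun b x _ => ⟨s b x, mem_range_self x, hinv b x⟩)
      (hrange ▸ pairwise_disjoint_on_bool.mpr hcompl.disjoint)
      (by rw [hrange, preimage_univ, ← union_eq_iUnion, hcover]))
    (fun _ => mem_univ _)
  have : s b ⁻¹' (f ⁻¹' W ∩ range (s b)) = W := by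
    ext x
    simp [hinv b x]
  exact this ▸ hW.preimage (hs b)

end TwoSections

namespace bdeQ

noncomputable def radius (v : ℝ × ℝ) : ℝ := √(v.1 ^ 2 + v.2 ^ 2)

theorem radius_sq (v : ℝ × ℝ) : radius v ^ 2 = v.1 ^ 2 + v.2 ^ 2 :=
  Real.sq_sqrt (by positivity)

theorem radius_nonneg (v : ℝ × ℝ) : 0 ≤ radius v :=
  Real.sqrt_nonneg _

@[fun_prop]
theorem continuous_radius : Continuous radius := by
  unfold radius
  fun_prop

theorem abs_fst_lt_radius {v : ℝ × ℝ} (h : v.2 ≠ 0) : |v.1| < radius v :=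
  (Real.lt_sqrt (abs_nonneg _)).2 (by rw [sq_abs]; linarith [pow_two_pos_of_ne_zero h])

def posSlit : Set (ℝ × ℝ) := {v | v.2 ≠ 0 ∨ 0 < v.1}

def negSlit : Set (ℝ × ℝ) := {v | v.2 ≠ 0 ∨ v.1 < 0}

theorem isOpen_posSlit : IsOpen posSlit :=
  (isOpen_ne.preimage continuous_snd).union (isOpen_lt continuous_const continuous_fst)

theorem isOpen_negSlit : IsOpen negSlit :=
  (isOpen_ne.preimage continuous_snd).union (isOpen_lt continuous_fst continuous_const)

theorem mem_negSlit_of_notMem_posSlit {v : ℝ × ℝ} (hv : v ≠ 0) (h : v ∉ posSlit) :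
    v ∈ negSlit := by
  simp only [posSlit, negSlit, mem_ofPred_eq, not_or, not_not, not_lt] at h ⊢
  exact .inr (h.2.lt_of_ne fun h₁ => hv (Prod.ext h₁ h.1))

theorem fst_add_radius_pos {v : ℝ × ℝ} (h : v ∈ posSlit) : 0 < v.1 + radius v := by
  rcases h with h | h
  · linarith [abs_fst_lt_radius h, neg_abs_le v.1]
  · linarith [radius_nonneg v]

theorem fst_sub_radius_neg {v : ℝ × ℝ} (h : v ∈ negSlit) : v.1 - radius v < 0 := by
  rcases h with h | h
  · linarith [abs_fst_lt_radius h, le_abs_self v.1]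
  · linarith [radius_nonneg v]

def form (v w : ℝ × ℝ) : ℝ := v.2 * w.1 ^ 2 - 2 * v.1 * w.1 * w.2 - v.2 * w.2 ^ 2

theorem mk_mem_iff (v w : ℝ × ℝ) (hw : w ≠ 0) : (v, mk ℝ w hw) ∈ bdeQ ↔ form v w = 0 := by
  obtain ⟨a, ha⟩ := exists_smul_eq_mk_rep ℝ w hw
  have : form v (mk ℝ w hw).rep = a ^ 2 * form v w := by
    rw [← ha]
    simp only [form, Units.smul_def, Prod.smul_fst, Prod.smul_snd, smul_eq_mul]
    ring
  change form v (mk ℝ w hw).rep = 0 ↔ _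
  rw [this, mul_eq_zero, or_iff_right (pow_ne_zero 2 a.ne_zero)]

/-- Over a square root `ρ` of `x² + y²` the form splits into the null lines `[x + ρ : y]` and
`[-y : x + ρ]`. -/
theorem mul_form_eq {v : ℝ × ℝ} {ρ : ℝ} (hρ : ρ ^ 2 = v.1 ^ 2 + v.2 ^ 2) (w : ℝ × ℝ) :
    (v.1 + ρ) * form v w =
      (w.1 * v.2 - w.2 * (v.1 + ρ)) * (w.1 * (v.1 + ρ) - w.2 * -v.2) := by
  unfold form
  linear_combination w.1 * w.2 * hρ

theorem form_eq_zero_iff {v : ℝ × ℝ} {ρ : ℝ} (hρ : ρ ^ 2 = v.1 ^ 2 + v.2 ^ 2)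
    (h : v.1 + ρ ≠ 0) (w : ℝ × ℝ) :
    form v w = 0 ↔ w.1 * v.2 - w.2 * (v.1 + ρ) = 0 ∨ w.1 * (v.1 + ρ) - w.2 * -v.2 = 0 := by
  rw [← mul_eq_zero, ← mul_form_eq hρ, mul_eq_zero, or_iff_right h]

abbrev PuncturedPlane := {v : ℝ × ℝ // v ≠ 0}

open Classical in
noncomputable def sheet₁ (v : PuncturedPlane) : ℙ ℝ (ℝ × ℝ) :=
  if h : v.1 ∈ posSlit then
    mk ℝ (v.1.1 + radius v.1, v.1.2) (Prod.mk_ne_zero_of_left _ (fst_add_radius_pos h).ne')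
  else
    mk ℝ (-v.1.2, v.1.1 - radius v.1)
      (Prod.mk_ne_zero_of_right _ (fst_sub_radius_neg (mem_negSlit_of_notMem_posSlit v.2 h)).ne)

open Classical in
noncomputable def sheet₂ (v : PuncturedPlane) : ℙ ℝ (ℝ × ℝ) :=
  if h : v.1 ∈ posSlit then
    mk ℝ (-v.1.2, v.1.1 + radius v.1) (Prod.mk_ne_zero_of_right _ (fst_add_radius_pos h).ne')
  else
    mk ℝ (v.1.1 - radius v.1, v.1.2)
      (Prod.mk_ne_zero_of_left _ (fst_sub_radius_neg (mem_negSlit_of_notMem_posSlit v.2 h)).ne)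

theorem mem_iff_eq_sheet (v : PuncturedPlane) (l : ℙ ℝ (ℝ × ℝ)) :
    (v.1, l) ∈ bdeQ ↔ l = sheet₁ v ∨ l = sheet₂ v := by
  induction l using Projectivization.ind with | h w hw => ?_
  rw [mk_mem_iff, sheet₁, sheet₂]
  split_ifs with h
  · rw [form_eq_zero_iff (radius_sq v.1) (fst_add_radius_pos h).ne',
      mk_eq_mk_iff_mul_sub_mul_eq_zero, mk_eq_mk_iff_mul_sub_mul_eq_zero]
  · -- off `posSlit` the root `-√(x² + y²)` is used, which swaps the two lines
    have hρ : (-radius v.1) ^ 2 = v.1.1 ^ 2 + v.1.2 ^ 2 := by rw [neg_sq, radius_sq]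
    rw [form_eq_zero_iff hρ (fst_sub_radius_neg (mem_negSlit_of_notMem_posSlit v.2 h)).ne,
      mk_eq_mk_iff_mul_sub_mul_eq_zero, mk_eq_mk_iff_mul_sub_mul_eq_zero, or_comm,
      ← sub_eq_add_neg]

theorem sheet₁_ne_sheet₂ (v : PuncturedPlane) : sheet₁ v ≠ sheet₂ v := by
  rw [sheet₁, sheet₂]
  split_ifs
  · exact mk_ne_mk_neg_snd_fst _ _
  · exact (mk_ne_mk_neg_snd_fst (u := (v.1.1 - radius v.1, v.1.2)) _ _).symm

theorem preimage_val_posSlit_union_negSlit :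
    ((↑) : PuncturedPlane → ℝ × ℝ) ⁻¹' posSlit ∪ (↑) ⁻¹' negSlit = univ := by
  refine eq_univ_of_forall fun v => ?_
  by_cases h : v.1 ∈ posSlit
  exacts [.inl h, .inr (mem_negSlit_of_notMem_posSlit v.2 h)]

theorem continuous_of_eq_mk_on_slits {f : PuncturedPlane → ℙ ℝ (ℝ × ℝ)}
    {uPos uNeg : PuncturedPlane → ℝ × ℝ} (hPos : Continuous uPos) (hNeg : Continuous uNeg)
    (hfPos : ∀ v : PuncturedPlane, v.1 ∈ posSlit → ∃ hv : uPos v ≠ 0, f v = mk ℝ (uPos v) hv)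
    (hfNeg : ∀ v : PuncturedPlane, v.1 ∈ negSlit → ∃ hv : uNeg v ≠ 0, f v = mk ℝ (uNeg v) hv) :
    Continuous f := by
  rw [← continuousOn_univ, ← preimage_val_posSlit_union_negSlit]
  exact (continuousOn_of_eq_mk hPos.continuousOn hfPos).union_of_isOpen
    (continuousOn_of_eq_mk hNeg.continuousOn hfNeg)
    (isOpen_posSlit.preimage continuous_subtype_val)
    (isOpen_negSlit.preimage continuous_subtype_val)

theorem continuous_sheet₁ : Continuous sheet₁ := by
  refine continuous_of_eq_mk_on_slits (uPos := fun v => (v.1.1 + radius v.1, v.1.2))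
    (uNeg := fun v => (-v.1.2, v.1.1 - radius v.1)) (by fun_prop) (by fun_prop)
    (fun v h => ⟨_, dif_pos h⟩)
    fun v h => ⟨Prod.mk_ne_zero_of_right _ (fst_sub_radius_neg h).ne, ?_⟩
  rw [sheet₁]
  split_ifs
  · rw [mk_eq_mk_iff_mul_sub_mul_eq_zero]
    linear_combination -radius_sq v.1
  · rfl

theorem continuous_sheet₂ : Continuous sheet₂ := by
  refine continuous_of_eq_mk_on_slits (uPos := fun v => (-v.1.2, v.1.1 + radius v.1))
    (uNeg := fun v => (v.1.1 - radius v.1, v.1.2)) (by fun_prop) (by fun_prop)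
    (fun v h => ⟨_, dif_pos h⟩)
    fun v h => ⟨Prod.mk_ne_zero_of_left _ (fst_sub_radius_neg h).ne, ?_⟩
  rw [sheet₂]
  split_ifs
  · rw [mk_eq_mk_iff_mul_sub_mul_eq_zero]
    linear_combination radius_sq v.1
  · rfl

abbrev Solutions := {m : (ℝ × ℝ) × ℙ ℝ (ℝ × ℝ) // m ∈ bdeQ ∧ m.1 ≠ 0}

def proj (m : Solutions) : PuncturedPlane := ⟨m.1.1, m.2.2⟩

noncomputable def section₁ (v : PuncturedPlane) : Solutions :=
  ⟨(v, sheet₁ v), (mem_iff_eq_sheet v _).2 (.inl rfl), v.2⟩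

noncomputable def section₂ (v : PuncturedPlane) : Solutions :=
  ⟨(v, sheet₂ v), (mem_iff_eq_sheet v _).2 (.inr rfl), v.2⟩

theorem continuous_proj : Continuous proj := by
  unfold proj
  fun_prop

theorem continuous_section₁ : Continuous section₁ :=
  (continuous_subtype_val.prodMk continuous_sheet₁).subtype_mk _

theorem continuous_section₂ : Continuous section₂ :=
  (continuous_subtype_val.prodMk continuous_sheet₂).subtype_mk _

theorem leftInverse_proj_section₁ : LeftInverse proj section₁ := fun _ => rfl

theorem leftInverse_proj_section₂ : LeftInverse proj section₂ := fun _ => rfl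

theorem range_section₁_inter_range_section₂ : range section₁ ∩ range section₂ = ∅ := by
  refine eq_empty_of_forall_notMem ?_
  rintro _ ⟨⟨v, rfl⟩, v', h⟩
  obtain rfl : v' = v := congrArg proj h
  exact sheet₁_ne_sheet₂ v' (congrArg (fun m => m.1.2) h).symm

theorem range_section₁_union_range_section₂ : range section₁ ∪ range section₂ = univ := by
  refine eq_univ_of_forall ?_
  rintro ⟨⟨v, l⟩, hl, hv⟩
  rcases (mem_iff_eq_sheet ⟨v, hv⟩ l).1 hl with h | h
  exacts [.inl ⟨_, Subtype.ext (Prod.ext rfl h.symm)⟩, .inr ⟨_, Subtype.ext (Prod.ext rfl h.symm)⟩]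

end bdeQ

/-- For the binary differential equation `y dx² - 2x dxdy - y dy² = 0` on
`ℝ²`, with solution set `Q ⊆ ℝ² × ℝP¹`, the projection `(x,y,[p:q]) ↦ (x,y)` restricted to the
part `Q'` of `Q` over `M' = ℝ² \ {0}` is a 2-sheeted covering map, and this covering is
trivial: it admits two disjoint continuous sections `s₁, s₂` whose images cover `Q'`
(given on the slit planes by `s₁ = [x+√(x²+y²) : y]`, resp. `[-y : x-√(x²+y²)]`,
and `s₂` with the roles exchanged). -/
theorem stmt14 :
    IsCoveringMap (fun m : {m : (ℝ × ℝ) × Projectivization ℝ (ℝ × ℝ) //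
        m ∈ bdeQ ∧ m.1 ≠ 0} => (⟨m.1.1, m.2.2⟩ : {v : ℝ × ℝ // v ≠ 0})) ∧
    (∀ v : {v : ℝ × ℝ // v ≠ 0}, Nat.card
      ((fun m : {m : (ℝ × ℝ) × Projectivization ℝ (ℝ × ℝ) //
          m ∈ bdeQ ∧ m.1 ≠ 0} => (⟨m.1.1, m.2.2⟩ : {v : ℝ × ℝ // v ≠ 0})) ⁻¹' {v}) = 2) ∧
    ∃ s₁ s₂ : {v : ℝ × ℝ // v ≠ 0} →
        {m : (ℝ × ℝ) × Projectivization ℝ (ℝ × ℝ) // m ∈ bdeQ ∧ m.1 ≠ 0},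
      Continuous s₁ ∧ Continuous s₂ ∧
      (∀ v, ((s₁ v : (ℝ × ℝ) × Projectivization ℝ (ℝ × ℝ)).1 = (v : ℝ × ℝ))) ∧
      (∀ v, ((s₂ v : (ℝ × ℝ) × Projectivization ℝ (ℝ × ℝ)).1 = (v : ℝ × ℝ))) ∧
      (∀ (v : {v : ℝ × ℝ // v ≠ 0}) (hv : (v : ℝ × ℝ).2 ≠ 0 ∨ 0 < (v : ℝ × ℝ).1)
        (h1 : (((v : ℝ × ℝ).1 + Real.sqrt ((v : ℝ × ℝ).1 ^ 2 + (v : ℝ × ℝ).2 ^ 2),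
          (v : ℝ × ℝ).2) : ℝ × ℝ) ≠ 0),
        ((s₁ v : (ℝ × ℝ) × Projectivization ℝ (ℝ × ℝ)).2 =
          Projectivization.mk ℝ _ h1)) ∧
      (∀ (v : {v : ℝ × ℝ // v ≠ 0}) (hv : (v : ℝ × ℝ).2 ≠ 0 ∨ 0 < (v : ℝ × ℝ).1)
        (h2 : ((-(v : ℝ × ℝ).2, (v : ℝ × ℝ).1 +
          Real.sqrt ((v : ℝ × ℝ).1 ^ 2 + (v : ℝ × ℝ).2 ^ 2)) : ℝ × ℝ) ≠ 0),
        ((s₂ v : (ℝ × ℝ) × Projectivization ℝ (ℝ × ℝ)).2 =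
          Projectivization.mk ℝ _ h2)) ∧
      (Set.range s₁ ∩ Set.range s₂ = ∅) ∧
      (Set.range s₁ ∪ Set.range s₂ = Set.univ) := by
  open bdeQ in
  exact ⟨.of_sections continuous_proj continuous_section₁ continuous_section₂
      leftInverse_proj_section₁ leftInverse_proj_section₂
      range_section₁_inter_range_section₂ range_section₁_union_range_section₂,
    natCard_preimage_singleton_of_sections leftInverse_proj_section₁ leftInverse_proj_section₂
      range_section₁_inter_range_section₂ range_section₁_union_range_section₂,
    section₁, section₂, continuous_section₁, continuous_section₂, fun _ => rfl, fun _ => rfl,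
    fun _ hv _ => dif_pos hv, fun _ hv _ => dif_pos hv,
    range_section₁_inter_range_section₂, range_section₁_union_range_section₂⟩
end
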